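/- The coordinate change Φ sending (z_{11}, z_{21}, θ_{11}, θ_{21}) to (1/z_{11}, z_{21}/z_{11} + λθ_{11}θ_{21}/z_{11}², M·(θ_{11},θ_{21})ᵀ), where M is a 2×2 even matrix with det M = 1/z_{11}³, has super Jacobian whose Berezinian equals -1. -/
import Mathlib


noncomputable section

set_option maxHeartbeats 1000000 in
/-- **The Berezinian of the super Jacobian of Φ equals -1.**

Setting: `R` is a field of (rational) functions of the even coordinates `z₁₁, z₂₁`
(with derivations `d1 = ∂_{z₁₁}`, `d2 = ∂_{z₂₁}`), and the Grassmann algebra on the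
odd coordinates `θ₁₁ = θ 0`, `θ₂₁ = θ 1` is the exterior algebra
`Λ = ExteriorAlgebra R (Fin 2 → R)`, with `c : R → Λ` the inclusion of even scalars.
`M` is the (even) transition matrix of the fermionic sheaf, with `det M = 1/z₁₁³`.
The super Jacobian of the coordinate change
`Φ(z₁₁, z₂₁, θ₁₁, θ₂₁) = (1/z₁₁, z₂₁/z₁₁ + λθ₁₁θ₂₁/z₁₁², M·(θ₁₁,θ₂₁)ᵀ)` has blocks
`A = ((-1/z₁₁², 0), (-z₂₁/z₁₁² - 2λθ₁₁θ₂₁/z₁₁³, 1/z₁₁))`,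
`B = ((0,0), (λθ₂₁/z₁₁², -λθ₁₁/z₁₁²))`, `C = (∂_{z₁₁}M·θ, ∂_{z₂₁}M·θ)`, `D = M`.
Conclusion: `Ber(Jac Φ) = det(A - B D⁻¹ C)·det(D)⁻¹ = -1`, stated as
`det(A - B D⁻¹ C) = - det D` (2×2 determinants of matrices with even entries). -/
theorem stmt_8
    (R : Type) [Field R] [Algebra ℂ R]
    (z11 z21 : R) (hz : z11 ≠ 0) (lam : ℂ)
    (d1 d2 : Derivation ℂ R R)
    (hd1a : d1 z11 = 1) (hd1b : d1 z21 = 0) (hd2a : d2 z11 = 0) (hd2b : d2 z21 = 1)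
    (M : Matrix (Fin 2) (Fin 2) R) (hdet : M.det = z11⁻¹ ^ 3) :
    ∀ (c : R →+* ExteriorAlgebra R (Fin 2 → R))
      (θ : Fin 2 → ExteriorAlgebra R (Fin 2 → R)),
      c = (algebraMap R (ExteriorAlgebra R (Fin 2 → R))) →
      θ = (fun i => ExteriorAlgebra.ι R (Pi.single i 1)) →
      ∀ A B C D Dinv : Matrix (Fin 2) (Fin 2) (ExteriorAlgebra R (Fin 2 → R)),
        A = !![c (-(z11⁻¹ ^ 2)), 0;
               c (-(z21 * z11⁻¹ ^ 2)) -
                 c (2 * algebraMap ℂ R lam * z11⁻¹ ^ 3) * (θ 0 * θ 1), c z11⁻¹] →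
        B = !![0, 0;
               c (algebraMap ℂ R lam * z11⁻¹ ^ 2) * θ 1,
               -(c (algebraMap ℂ R lam * z11⁻¹ ^ 2) * θ 0)] →
        C = Matrix.of (fun i j : Fin 2 =>
              c ((if j = 0 then d1 else d2) (M i 0)) * θ 0 +
              c ((if j = 0 then d1 else d2) (M i 1)) * θ 1) →
        D = M.map c → Dinv = (M⁻¹).map c →
        (A - B * Dinv * C) 0 0 * (A - B * Dinv * C) 1 1 -
            (A - B * Dinv * C) 0 1 * (A - B * Dinv * C) 1 0 =
          -(D 0 0 * D 1 1 - D 0 1 * D 1 0) := by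
  intro c θ hc hθ A B C D Dinv hA hB hC hD hDinv
  -- scalar facts
  have hinv2 : d2 z11⁻¹ = 0 := by
    rw [Derivation.leibniz_inv, hd2a, smul_zero]
  have hMinv : M⁻¹ = (z11 ^ 3) • !![M 1 1, -(M 0 1); -(M 1 0), M 0 0] := by
    rw [Matrix.inv_def, Matrix.adjugate_fin_two, hdet, Ring.inverse_eq_inv, inv_pow, inv_inv]
  have hkey : M 0 0 * d2 (M 1 1) + M 1 1 * d2 (M 0 0)
      - (M 0 1 * d2 (M 1 0) + M 1 0 * d2 (M 0 1)) = 0 := by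
    have h := congrArg d2 (Matrix.det_fin_two M ▸ hdet)
    simp only [map_sub, Derivation.leibniz, Derivation.leibniz_pow, smul_eq_mul, hinv2,
      mul_zero, smul_zero] at h
    exact h
  -- row 0 of B*Dinv*C vanishes
  have hrow0 : ∀ j, (B * Dinv * C) 0 j = 0 := by
    intro j
    rw [Matrix.mul_assoc]
    simp [hB, Matrix.mul_apply, Fin.sum_univ_two]
  have hcm : ∀ (r : R) (x : ExteriorAlgebra R (Fin 2 → R)), x * c r = c r * x := by
    subst hc; exact fun r x => (Algebra.commutes r x).symm
  have ht : ∀ i, θ i * θ i = 0 := by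
    subst hθ; exact fun i => ExteriorAlgebra.ι_sq_zero _
  have hswap : θ 1 * θ 0 = -(θ 0 * θ 1) := by
    subst hθ; exact eq_neg_of_add_eq_zero_left (ExteriorAlgebra.ι_add_mul_swap _ _)
  have hX : (B * Dinv * C) 1 1 = 0 := by
    rw [Matrix.mul_assoc, Matrix.mul_apply, Fin.sum_univ_two]
    simp only [hB, hC, hDinv, hMinv, Matrix.mul_apply, Fin.sum_univ_two, Matrix.map_apply,
      Matrix.smul_apply, Matrix.of_apply, Matrix.cons_val_zero, Matrix.cons_val_one,
      Matrix.head_cons, Matrix.cons_val', Matrix.empty_val', Matrix.cons_val_fin_one,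
      smul_eq_mul]
    norm_num [Matrix.vecHead]
    have hsw1 : ∀ (i : Fin 2) (r : R), θ i * c r = c r * θ i := fun i r => hcm r (θ i)
    have hsw2 : ∀ (i : Fin 2) (r : R) (x : ExteriorAlgebra R (Fin 2 → R)),
        θ i * (c r * x) = c r * (θ i * x) := by
      intro i r x; rw [← mul_assoc, hsw1, mul_assoc]
    have hcc : ∀ (a b : R) (x : ExteriorAlgebra R (Fin 2 → R)),
        c a * (c b * x) = c (a * b) * x := by
      intro a b x; rw [← mul_assoc, ← map_mul]
    have h00 : ∀ (x : ExteriorAlgebra R (Fin 2 → R)), θ 0 * (θ 0 * x) = 0 := by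
      intro x; rw [← mul_assoc, ht, zero_mul]
    have h11 : ∀ (x : ExteriorAlgebra R (Fin 2 → R)), θ 1 * (θ 1 * x) = 0 := by
      intro x; rw [← mul_assoc, ht, zero_mul]
    have h10 : ∀ (x : ExteriorAlgebra R (Fin 2 → R)), θ 1 * (θ 0 * x) = -(θ 0 * (θ 1 * x)) := by
      intro x; rw [← mul_assoc, hswap, neg_mul, mul_assoc]
    simp only [← map_pow, mul_add, mul_neg, neg_mul, neg_neg, mul_assoc, hsw1, hsw2, hcc,
      ← map_mul, h00, h11, h10, ht, mul_zero, neg_zero, add_zero, zero_add]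
    have hcneg : ∀ r : R, -c r = c (-r) := fun r => (map_neg c r).symm
    have hcadd : ∀ a b : R, c a + c b = c (a + b) := fun a b => (map_add c a b).symm
    simp only [hswap, mul_neg, neg_neg, neg_add, ← neg_mul, hcneg, ← add_mul, hcadd]
    simp only [neg_mul, mul_neg]
    simp only [← neg_mul, hcneg, ← add_mul, hcadd]
    have hz0 : ∀ s : R, s = 0 → c s * (θ 0 * θ 1) = 0 := fun s hs => by
      rw [hs, map_zero, zero_mul]
    apply hz0
    linear_combination (-(algebraMap ℂ R lam * ((z11 ^ 2)⁻¹ * z11 ^ 3))) * hkey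
  have hdet2 : M 0 0 * M 1 1 - M 0 1 * M 1 0 = z11⁻¹ ^ 3 := by
    rw [← hdet, Matrix.det_fin_two]
  simp only [Matrix.sub_apply, hrow0, hX, hA, hD, Matrix.map_apply,
    Matrix.cons_val', Matrix.cons_val_zero, Matrix.cons_val_one, Matrix.head_cons,
    Matrix.empty_val', Matrix.cons_val_fin_one, Matrix.head_fin_const, sub_zero,
    zero_sub, neg_zero, zero_mul, mul_zero]
  norm_num
  rw [← map_mul c (M 0 1) (M 1 0), ← map_mul c (M 0 0) (M 1 1), ← map_mul c (z11 ^ 2)⁻¹ z11⁻¹, ← map_sub, ← map_neg c ((z11 ^ 2)⁻¹ * z11⁻¹)]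
  congr 1
  linear_combination hdet2
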